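/- Let f : [0,1] → ℝ be continuously differentiable, monotonically nondecreasing and convex on [0,1], with ∫₀¹ (t − 2/3)·f(t) dt = 0. Then for every x ∈ [0, 1/3), the quantity q(2x) = f(2x) − (2/(1−3x)²)·∫₀^x (1−3t)·( f(1−t) − 4·f(2t) ) dt is nonnegative. -/

import Mathlib

/-!
Write `H x = (1 - 3x)² q(2x)`. Differentiating,
`H' x = 2 (1 - 3x) (f(2x) + (1 - 3x) f'(2x) - f(1 - x))`, which is `≤ 0` because the tangent
to the convex `f` at `2x` lies below `f` at `1 - x`. So `H` is antitone on `[0, 1/3]`, and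
`H (1/3) = -6 ∫₀¹ (t - 2/3) f t = 0`: the substitutions `t ↦ 1 - t` and `t ↦ 2t` turn
`∫₀^{1/3} (1 - 3t)(f(1 - t) - 4f(2t))` into three times the integrals of `(t - 2/3) f t` over
`[2/3, 1]` and `[0, 2/3]`. Hence `H x ≥ 0` on `[0, 1/3)`.
-/

open Set intervalIntegral
open MeasureTheory (volume)

theorem integral_comp_one_sub_add_two_mul_comp_two_mul {g : ℝ → ℝ}
    (hg : IntervalIntegrable g volume 0 1) :
    ∫ t in (0 : ℝ)..1/3, (g (1 - t) + 2 * g (2 * t)) = ∫ t in (0 : ℝ)..1, g t := by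
  have hg₁ : IntervalIntegrable g volume (2/3) 1 :=
    hg.mono_set (by rw [uIcc_of_le (by norm_num), uIcc_of_le (by norm_num)]; gcongr; norm_num)
  have hg₀ : IntervalIntegrable g volume 0 (2/3) :=
    hg.mono_set (by rw [uIcc_of_le (by norm_num), uIcc_of_le (by norm_num)]; gcongr; norm_num)
  have h₁ : IntervalIntegrable (fun t => g (1 - t)) volume 0 (1/3) := by
    convert (hg₁.comp_sub_left 1).symm using 1 <;> norm_num
  have h₀ : IntervalIntegrable (fun t => g (2 * t)) volume 0 (1/3) := by
    convert hg₀.comp_mul_left (c := 2) using 1 <;> norm_num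
  rw [integral_add h₁ (h₀.const_mul 2), integral_comp_sub_left, integral_const_mul,
    mul_integral_comp_mul_left, ← integral_add_adjacent_intervals hg₀ hg₁]
  norm_num
  ring

noncomputable def qKernel (f : ℝ → ℝ) (t : ℝ) : ℝ :=
  (1 - 3 * t) * (f (1 - t) - 4 * f (2 * t))

/-- `qScaled f x = (1 - 3x)² q(2x)`; unlike `q(2x)` it stays regular at `x = 1/3`. -/
noncomputable def qScaled (f : ℝ → ℝ) (x : ℝ) : ℝ :=
  (1 - 3 * x) ^ 2 * f (2 * x) - 2 * ∫ t in (0 : ℝ)..x, qKernel f t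

variable {f : ℝ → ℝ}

theorem integral_qKernel (hf : IntervalIntegrable f volume 0 1) :
    ∫ t in (0 : ℝ)..1/3, qKernel f t = 3 * ∫ t in (0 : ℝ)..1, (t - 2/3) * f t := by
  rw [← integral_comp_one_sub_add_two_mul_comp_two_mul (hf.continuousOn_mul (by fun_prop)),
    ← integral_const_mul]
  congr 1 with t
  simp only [qKernel]
  ring

theorem continuousOn_qKernel (hf : ContinuousOn f (Icc 0 1)) :
    ContinuousOn (qKernel f) (Icc 0 (1/2)) := by
  have h₁ : MapsTo (fun t : ℝ => 1 - t) (Icc 0 (1/2)) (Icc 0 1) :=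
    fun t ht => ⟨by linarith [ht.2], by linarith [ht.1]⟩
  have h₂ : MapsTo (fun t : ℝ => 2 * t) (Icc 0 (1/2)) (Icc 0 1) :=
    fun t ht => ⟨by linarith [ht.1], by linarith [ht.2]⟩
  unfold qKernel
  fun_prop (disch := assumption)

theorem continuousOn_qScaled (hf : ContinuousOn f (Icc 0 1)) :
    ContinuousOn (qScaled f) (Icc 0 (1/3)) := by
  have h₂ : MapsTo (fun t : ℝ => 2 * t) (Icc 0 (1/3)) (Icc 0 1) :=
    fun t ht => ⟨by linarith [ht.1], by linarith [ht.2]⟩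
  have hK : ContinuousOn (qKernel f) (uIcc 0 (1/3)) := by
    rw [uIcc_of_le (by norm_num)]
    exact (continuousOn_qKernel hf).mono (Icc_subset_Icc le_rfl (by norm_num))
  have hprim := continuousOn_primitive_interval (μ := volume) hK.integrableOn_uIcc
  rw [uIcc_of_le (by norm_num)] at hprim
  unfold qScaled
  fun_prop (disch := assumption)

theorem hasDerivAt_qScaled {d x : ℝ} (hf : ContinuousOn f (Icc 0 1)) (hx : x ∈ Ioo 0 (1/3))
    (hd : HasDerivAt f d (2 * x)) :
    HasDerivAt (qScaled f) (2 * (1 - 3 * x) * (f (2 * x) + (1 - 3 * x) * d - f (1 - x))) x := by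
  have hK := continuousOn_qKernel hf
  have hxK : x ∈ Ioo 0 (1/2) := ⟨hx.1, by linarith [hx.2]⟩
  have hprim : HasDerivAt (fun u => ∫ t in (0 : ℝ)..u, qKernel f t) (qKernel f x) x := by
    refine integral_hasDerivAt_right ?_ ?_ (hK.continuousAt (Icc_mem_nhds hxK.1 hxK.2))
    · refine (hK.mono ?_).intervalIntegrable
      rw [uIcc_of_le hx.1.le]
      exact Icc_subset_Icc le_rfl hxK.2.le
    · exact (hK.mono Ioo_subset_Icc_self).stronglyMeasurableAtFilter isOpen_Ioo x hxK
  have hlin : HasDerivAt (fun y : ℝ => 1 - 3 * y) (-3) x := by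
    simpa using ((hasDerivAt_id x).const_mul 3).const_sub 1
  have hdouble : HasDerivAt (fun y : ℝ => 2 * y) 2 x := by
    simpa using (hasDerivAt_id x).const_mul 2
  refine (((hlin.fun_pow 2).mul (hd.comp x hdouble)).sub (hprim.const_mul 2)).congr_deriv ?_
  simp only [qKernel, Function.comp_apply]
  ring

theorem ConvexOn.add_deriv_mul_sub_le {S : Set ℝ} {x y d : ℝ} (hf : ConvexOn ℝ S f)
    (hx : x ∈ S) (hy : y ∈ S) (hxy : x ≤ y) (hd : HasDerivWithinAt f d S x) :
    f x + d * (y - x) ≤ f y := by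
  rcases hxy.eq_or_lt with rfl | hlt
  · simp
  have := hf.le_slope_of_hasDerivWithinAt hx hy hlt hd
  rw [slope_def_field, le_div_iff₀ (sub_pos.2 hlt)] at this
  linarith

theorem qScaled_one_third (hf : IntervalIntegrable f volume 0 1) :
    qScaled f (1/3) = -6 * ∫ t in (0 : ℝ)..1, (t - 2/3) * f t := by
  rw [qScaled, integral_qKernel hf]
  ring

theorem antitoneOn_qScaled {f' : ℝ → ℝ}
    (hf : ∀ x ∈ Icc (0 : ℝ) 1, HasDerivWithinAt f (f' x) (Icc 0 1) x)
    (hconv : ConvexOn ℝ (Icc 0 1) f) :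
    AntitoneOn (qScaled f) (Icc 0 (1/3)) := by
  have hfc : ContinuousOn f (Icc 0 1) := fun x hx => (hf x hx).continuousWithinAt
  refine antitoneOn_of_hasDerivWithinAt_nonpos (convex_Icc _ _) (continuousOn_qScaled hfc)
    (f' := fun x => 2 * (1 - 3 * x) * (f (2 * x) + (1 - 3 * x) * f' (2 * x) - f (1 - x)))
    (fun x hx => ?_) (fun x hx => ?_) <;> rw [interior_Icc] at hx
  · have h2x : 2 * x ∈ Ioo (0 : ℝ) 1 := ⟨by linarith [hx.1], by linarith [hx.2]⟩
    exact (hasDerivAt_qScaled hfc hx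
      ((hf _ (Ioo_subset_Icc_self h2x)).hasDerivAt (Icc_mem_nhds h2x.1 h2x.2))).hasDerivWithinAt
  · have htangent := hconv.add_deriv_mul_sub_le (x := 2 * x) (y := 1 - x)
      ⟨by linarith [hx.1], by linarith [hx.2]⟩ ⟨by linarith [hx.2], by linarith [hx.1]⟩
      (by linarith [hx.2]) (hf _ ⟨by linarith [hx.1], by linarith [hx.2]⟩)
    have h3x : 0 ≤ 1 - 3 * x := by linarith [hx.2]
    exact mul_nonpos_of_nonneg_of_nonpos (by positivity) (by linarith)

theorem q_nonneg (f f' : ℝ → ℝ)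
    (hderiv : ∀ x ∈ Set.Icc (0 : ℝ) 1, HasDerivWithinAt f (f' x) (Set.Icc (0 : ℝ) 1) x)
    (hconv : ConvexOn ℝ (Set.Icc (0 : ℝ) 1) f)
    (hint : (∫ t in (0 : ℝ)..1, (t - 2/3) * f t) = 0) :
    ∀ x ∈ Set.Ico (0 : ℝ) (1/3),
      0 ≤ f (2*x) - (2 / (1 - 3*x)^2) *
        ∫ t in (0 : ℝ)..x, (1 - 3*t) * (f (1 - t) - 4 * f (2*t)) := by
  intro x hx
  have hfc : ContinuousOn f (Icc 0 1) := fun y hy => (hderiv y hy).continuousWithinAt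
  have hend : qScaled f (1/3) = 0 := by
    rw [qScaled_one_third (hfc.intervalIntegrable_of_Icc zero_le_one), hint, mul_zero]
  have hq : 0 ≤ qScaled f x :=
    hend ▸ antitoneOn_qScaled hderiv hconv ⟨hx.1, hx.2.le⟩ ⟨by norm_num, le_rfl⟩ hx.2.le
  have hpos : 0 < (1 - 3 * x) ^ 2 := by nlinarith [hx.2]
  rw [sub_nonneg, div_mul_eq_mul_div, div_le_iff₀ hpos, mul_comm (f _)]
  exact sub_nonneg.1 hq
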